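/- arXiv:2311.12305 — 2 statements merged into one kernel-verified Lean document; each statement's English description precedes it below -/
import Mathlib

section
/- The 1-Wasserstein distance between the ULD distributions of two points γ₁, γ₂ ∈ [0, I) equals |γ₁ - γ₂|, i.e., γ ↦ y^u(γ) is an isometry from ([0, I), |·|) into the space of probability distributions on {0, ..., I} with the 1-Wasserstein metric. -/
/-- The Unbiased Label Distribution, indexed by integers. -/
noncomputable def uldZ (γ : ℝ) : ℤ → ℝ := fun i =>
  if i = ⌊γ⌋ then 1 - Int.fract γ
  else if i = ⌊γ⌋ + 1 then Int.fract γ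
  else 0

/-- Cumulative distribution function of a mass function on `ℤ`. -/
noncomputable def cdf (f : ℤ → ℝ) (k : ℤ) : ℝ := ∑' j : {j : ℤ // j ≤ k}, f j

/-- For integer-supported distributions, the CDFs are step functions constant on each
`[k, k+1)`, so the 1-Wasserstein distance `∫ |F_μ(t) - F_ν(t)| dt` equals
`∑_{k ∈ ℤ} |F_μ(k) - F_ν(k)|`. -/
noncomputable def wasserstein1 (f g : ℤ → ℝ) : ℝ := ∑' k : ℤ, |cdf f k - cdf g k|

lemma cdf_uld (γ : ℝ) (k : ℤ) :
    cdf (uldZ γ) k = max 0 (min 1 ((k : ℝ) + 1 - γ)) := by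
  have hfl : (⌊γ⌋ : ℝ) ≤ γ := Int.floor_le γ
  have hfl1 : γ < ⌊γ⌋ + 1 := Int.lt_floor_add_one γ
  have hfr : Int.fract γ = γ - ⌊γ⌋ := rfl
  have hne : ⌊γ⌋ ≠ ⌊γ⌋ + 1 := by omega
  rw [cdf]
  erw [tsum_subtype {j : ℤ | j ≤ k} (uldZ γ)]
  rw [tsum_eq_sum (s := ({⌊γ⌋, ⌊γ⌋ + 1} : Finset ℤ)) (by
    intro j hj
    simp only [Finset.mem_insert, Finset.mem_singleton, not_or] at hj
    have : uldZ γ j = 0 := by simp [uldZ, hj.1, hj.2]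
    simp [Set.indicator, this])]
  rw [Finset.sum_pair hne]
  by_cases h2 : ⌊γ⌋ + 1 ≤ k
  · have h1 : ⌊γ⌋ ≤ k := by omega
    have hk : (1:ℝ) ≤ (k : ℝ) + 1 - γ := by
      have : (⌊γ⌋ : ℝ) + 1 ≤ (k : ℝ) := by exact_mod_cast h2
      linarith
    simp only [Set.indicator, Set.mem_setOf_eq, h1, h2, if_true]
    rw [min_eq_left hk, max_eq_right (by norm_num : (0:ℝ) ≤ 1)]
    simp [uldZ, hne]
  · by_cases h1 : ⌊γ⌋ ≤ k
    · have hk : k = ⌊γ⌋ := by omega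
      have hx : (k : ℝ) + 1 - γ = 1 - Int.fract γ := by
        rw [hk, hfr]; push_cast; ring
      have h2' : ¬ (⌊γ⌋ + 1 ≤ k) := h2
      simp only [Set.indicator, Set.mem_setOf_eq, h1, if_true, h2', if_false]
      rw [hx]
      have hf0 : 0 ≤ Int.fract γ := Int.fract_nonneg γ
      have hf1 : Int.fract γ < 1 := Int.fract_lt_one γ
      rw [min_eq_right (by linarith), max_eq_right (by linarith)]
      simp [uldZ, hk, hne]
    · have hk : (k : ℝ) + 1 - γ ≤ 0 := by
        have : (k : ℝ) + 1 ≤ (⌊γ⌋ : ℝ) := by exact_mod_cast (by omega : k + 1 ≤ ⌊γ⌋)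
        linarith
      have h2' : ¬ (⌊γ⌋ + 1 ≤ k) := h2
      simp only [Set.indicator, Set.mem_setOf_eq, h1, h2', if_false]
      rw [max_eq_left (le_trans (min_le_right _ _) hk)]
      simp

lemma key (γ₁ γ₂ : ℝ) (h : γ₁ ≤ γ₂) :
    wasserstein1 (uldZ γ₁) (uldZ γ₂) = γ₂ - γ₁ := by
  set m₁ := ⌊γ₁⌋ with hm₁
  set m₂ := ⌊γ₂⌋ with hm₂
  have hm : m₁ ≤ m₂ := Int.floor_le_floor h
  have hfl1 : (m₁ : ℝ) ≤ γ₁ := Int.floor_le γ₁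
  have hfl1' : γ₁ < m₁ + 1 := Int.lt_floor_add_one γ₁
  have hfl2 : (m₂ : ℝ) ≤ γ₂ := Int.floor_le γ₂
  have hfl2' : γ₂ < m₂ + 1 := Int.lt_floor_add_one γ₂
  have habs : ∀ k : ℤ, |cdf (uldZ γ₁) k - cdf (uldZ γ₂) k|
      = max 0 (min 1 ((k : ℝ) + 1 - γ₁)) - max 0 (min 1 ((k : ℝ) + 1 - γ₂)) := by
    intro k
    rw [cdf_uld, cdf_uld]
    exact abs_of_nonneg (sub_nonneg.mpr (max_le_max le_rfl
      (min_le_min le_rfl (by linarith))))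
  rw [wasserstein1, tsum_congr habs]
  rw [tsum_eq_sum (s := Finset.Icc m₁ m₂) (by
    intro k hk
    simp only [Finset.mem_Icc, not_and_or, not_le] at hk
    rcases hk with hk | hk
    · have hk1 : ((k : ℝ) + 1) ≤ m₁ := by exact_mod_cast (by omega : k + 1 ≤ m₁)
      have e1 : (k : ℝ) + 1 - γ₁ ≤ 0 := by linarith
      have e2 : (k : ℝ) + 1 - γ₂ ≤ 0 := by linarith
      rw [max_eq_left (le_trans (min_le_right _ _) e1),
          max_eq_left (le_trans (min_le_right _ _) e2), sub_self]
    · have hk1 : ((m₂ : ℝ) + 1) ≤ k := by exact_mod_cast (by omega : m₂ + 1 ≤ k)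
      have e1 : (1:ℝ) ≤ (k : ℝ) + 1 - γ₁ := by linarith
      have e2 : (1:ℝ) ≤ (k : ℝ) + 1 - γ₂ := by linarith
      rw [min_eq_left e1, min_eq_left e2, sub_self])]
  rw [Finset.sum_sub_distrib]
  have hs1 : ∑ k ∈ Finset.Icc m₁ m₂, max 0 (min 1 ((k : ℝ) + 1 - γ₁))
      = ((m₁ : ℝ) + 1 - γ₁) + (m₂ - m₁) := by
    rw [← Finset.Ioc_insert_left hm, Finset.sum_insert Finset.left_notMem_Ioc]
    have h1 : max 0 (min 1 ((m₁ : ℝ) + 1 - γ₁)) = (m₁ : ℝ) + 1 - γ₁ := by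
      rw [min_eq_right (by linarith), max_eq_right (by linarith)]
    have h2 : ∀ k ∈ Finset.Ioc m₁ m₂, max 0 (min 1 ((k : ℝ) + 1 - γ₁)) = 1 := by
      intro k hk
      have := (Finset.mem_Ioc.mp hk).1
      have : ((m₁ : ℝ) + 1) ≤ k := by exact_mod_cast (by omega : m₁ + 1 ≤ k)
      rw [min_eq_left (by linarith), max_eq_right (by norm_num)]
    rw [h1, Finset.sum_congr rfl h2, Finset.sum_const, Int.card_Ioc]
    have h3 : (((m₂ - m₁).toNat : ℕ) : ℝ) = (m₂ : ℝ) - m₁ := by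
      rw [show (((m₂ - m₁).toNat : ℕ) : ℝ) = (((m₂ - m₁).toNat : ℤ) : ℝ) by push_cast; ring,
        Int.toNat_of_nonneg (by omega)]
      push_cast; ring
    rw [nsmul_eq_mul, mul_one, h3]
  have hs2 : ∑ k ∈ Finset.Icc m₁ m₂, max 0 (min 1 ((k : ℝ) + 1 - γ₂))
      = (m₂ : ℝ) + 1 - γ₂ := by
    rw [← Finset.Ico_insert_right hm, Finset.sum_insert Finset.right_notMem_Ico]
    have h1 : max 0 (min 1 ((m₂ : ℝ) + 1 - γ₂)) = (m₂ : ℝ) + 1 - γ₂ := by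
      rw [min_eq_right (by linarith), max_eq_right (by linarith)]
    have h2 : ∀ k ∈ Finset.Ico m₁ m₂, max 0 (min 1 ((k : ℝ) + 1 - γ₂)) = 0 := by
      intro k hk
      have := (Finset.mem_Ico.mp hk).2
      have : ((k : ℝ) + 1) ≤ m₂ := by exact_mod_cast (by omega : k + 1 ≤ m₂)
      rw [max_eq_left (le_trans (min_le_right _ _) (by linarith))]
    rw [h1, Finset.sum_congr rfl h2, Finset.sum_const, smul_zero, add_zero]
  rw [hs1, hs2]; ring

/-- ULD encoding is an isometry into 1-Wasserstein space:
`W₁(y^u(γ₁), y^u(γ₂)) = |γ₁ - γ₂|`. -/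
theorem uld_wasserstein_isometry (I : ℕ) (γ₁ γ₂ : ℝ)
    (h₁ : γ₁ ∈ Set.Ico (0 : ℝ) I) (h₂ : γ₂ ∈ Set.Ico (0 : ℝ) I) :
    wasserstein1 (uldZ γ₁) (uldZ γ₂) = |γ₁ - γ₂| := by
  rcases le_total γ₁ γ₂ with h | h
  · rw [key γ₁ γ₂ h, abs_of_nonpos (by linarith), neg_sub]
  · have hsym : wasserstein1 (uldZ γ₁) (uldZ γ₂) = wasserstein1 (uldZ γ₂) (uldZ γ₁) := by
      unfold wasserstein1
      exact tsum_congr fun k => abs_sub_comm _ _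
    rw [hsym, key γ₂ γ₁ h, abs_of_nonneg (by linarith)]
end

section
/- If a predicted distribution ŷ ∈ [0,1]^{I+1} with ∑ ŷ_i = 1 is supported on two adjacent classes k and k+1, then WAD-2 decoding recovers the exact expectation: the decoded value equals (∑_i ŷ_i · i)·l. -/
/-- If a predicted distribution `yhat ∈ [0,1]^{I+1}` with `∑ yhat_i = 1` is supported on
two adjacent classes `k` and `k+1` (with unequal probabilities, so the peak and
higher-adjacent classes of WAD-2 are exactly `k` and `k+1`), then WAD-2 decoding
`(yhat_k·k + yhat_{k+1}·(k+1))·l / (yhat_k + yhat_{k+1})` recovers the exact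
expectation `(∑ yhat_i · i)·l`. -/
theorem wad2_exact_on_adjacent_support (I : ℕ) (yhat : Fin (I + 1) → ℝ) (l : ℝ)
    (hl : 0 < l) (hy : ∀ i, yhat i ∈ Set.Icc (0 : ℝ) 1) (hsum : ∑ i, yhat i = 1)
    (k k' : Fin (I + 1)) (hk' : (k' : ℕ) = (k : ℕ) + 1)
    (hsupp : ∀ i : Fin (I + 1), i ≠ k → i ≠ k' → yhat i = 0)
    (hne : yhat k ≠ yhat k') :
    (yhat k * (k : ℝ) + yhat k' * (k' : ℝ)) * l / (yhat k + yhat k') =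
      (∑ i : Fin (I + 1), yhat i * (i : ℝ)) * l := by

  have hkk' : k ≠ k' := by
    intro h; rw [h] at hk'; omega
  have hsum2 : yhat k + yhat k' = 1 := by
    have : ∑ i, yhat i = ∑ i ∈ ({k, k'} : Finset (Fin (I+1))), yhat i := by
      symm
      apply Finset.sum_subset (Finset.subset_univ _)
      intro i _ hi
      simp [Finset.mem_insert, Finset.mem_singleton] at hi
      exact hsupp i hi.1 hi.2
    rw [this, Finset.sum_pair hkk'] at hsum
    exact hsum
  have hsum3 : ∑ i : Fin (I + 1), yhat i * (i : ℝ) =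
      yhat k * (k : ℝ) + yhat k' * (k' : ℝ) := by
    rw [← Finset.sum_pair hkk' (f := fun i => yhat i * (i : ℝ))]
    symm
    apply Finset.sum_subset (Finset.subset_univ _)
    intro i _ hi
    simp [Finset.mem_insert, Finset.mem_singleton] at hi
    rw [hsupp i hi.1 hi.2, zero_mul]
  rw [hsum3, hsum2, div_one]
end
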